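/- Let a and b be fraternal twins in a vertex-weighted graph G (either both looped and nonadjacent to each other, or both unlooped and adjacent to each other, and with the same neighbors outside {a,b}). Let G′ be obtained from G−b by changing the weights of a to α′(a) = α(a)β(b) + β(a)α(b) and β′(a) = β(a)β(b) + α(a)α(b)(x−1)². Then q(G) = q(G′). -/

import Mathlib

open Finset

/-- GF(2) rank of the adjacency matrix of the induced subgraph on `S`. -/
noncomputable def mrank {V : Type} [Fintype V] [DecidableEq V]
    (M : Matrix V V (ZMod 2)) (S : Finset V) : ℕ :=
  (Matrix.of (fun i j : {v // v ∈ S} => M i.1 j.1)).rank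

/-- The weighted interlace polynomial of the graph with adjacency matrix `M`
restricted to the vertex set `U`, with vertex weights `α`, `β`, evaluated at `x`, `y`. -/
noncomputable def interlaceQ {V : Type} [Fintype V] [DecidableEq V]
    {R : Type} [CommRing R] (M : Matrix V V (ZMod 2)) (U : Finset V)
    (α β : V → R) (x y : R) : R :=
  ∑ S ∈ U.powerset, (∏ s ∈ S, α s) * (∏ v ∈ U \ S, β v) *
    (x - 1) ^ mrank M S * (y - 1) ^ (S.card - mrank M S)

/-- Local complementation at `a`: toggle adjacencies (including loops) among
neighbors of `a` distinct from `a`. -/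
def localComp {V : Type} [DecidableEq V] (M : Matrix V V (ZMod 2)) (a : V) :
    Matrix V V (ZMod 2) :=
  fun i j => if i = a ∨ j = a then M i j else M i j + M i a * M j a

/-- Pivot at the edge `ab`. -/
def pivot {V : Type} [DecidableEq V] (M : Matrix V V (ZMod 2)) (a b : V) :
    Matrix V V (ZMod 2) :=
  fun i j => if i = a ∨ i = b ∨ j = a ∨ j = b then M i j
    else M i j + M i a * M j b + M i b * M j a

section AuxRank

open Matrix

variable {F : Type} [Field F]


lemma myRangeProdMap {M N P Q : Type} [AddCommGroup M] [AddCommGroup N] [AddCommGroup P]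
    [AddCommGroup Q] [Module F M] [Module F N] [Module F P] [Module F Q]
    (f : M →ₗ[F] N) (g : P →ₗ[F] Q) :
    LinearMap.range (f.prodMap g) = (LinearMap.range f).prod (LinearMap.range g) := by
  ext ⟨x, y⟩
  simp only [LinearMap.mem_range, Submodule.mem_prod, Prod.ext_iff, LinearMap.prodMap_apply]
  constructor
  · rintro ⟨⟨u, v⟩, h1, h2⟩; exact ⟨⟨u, h1⟩, ⟨v, h2⟩⟩
  · rintro ⟨⟨u, h1⟩, ⟨v, h2⟩⟩; exact ⟨(u, v), h1, h2⟩

/-- linear equiv between product of submodules and submodule of product -/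
def subProdEquiv {M N : Type} [AddCommGroup M] [AddCommGroup N] [Module F M] [Module F N]
    (p : Submodule F M) (q : Submodule F N) : ↥(p.prod q) ≃ₗ[F] ↥p × ↥q where
  toFun x := (⟨x.1.1, x.2.1⟩, ⟨x.1.2, x.2.2⟩)
  invFun x := ⟨(x.1.1, x.2.1), ⟨x.1.2, x.2.2⟩⟩
  map_add' _ _ := rfl
  map_smul' _ _ := rfl
  left_inv _ := rfl
  right_inv _ := rfl

lemma finrank_prod_submodule {M N : Type} [AddCommGroup M] [AddCommGroup N] [Module F M]
    [Module F N] [FiniteDimensional F M] [FiniteDimensional F N]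
    (p : Submodule F M) (q : Submodule F N) :
    Module.finrank F ↥(p.prod q) = Module.finrank F ↥p + Module.finrank F ↥q := by
  rw [(subProdEquiv p q).finrank_eq, Module.finrank_prod]

lemma rank_fromBlocks_diag {m p : Type} [Fintype m] [Fintype p] [DecidableEq m] [DecidableEq p]
    (A : Matrix m m F) (D : Matrix p p F) :
    (Matrix.fromBlocks A 0 0 D).rank = A.rank + D.rank := by
  set e := LinearEquiv.sumArrowLequivProdArrow m p F F with he
  have key : (Matrix.fromBlocks A 0 0 D).mulVecLin
      = (e.symm.toLinearMap ∘ₗ (A.mulVecLin.prodMap D.mulVecLin)) ∘ₗ e.toLinearMap := by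
    apply LinearMap.ext
    intro x
    simp only [LinearMap.comp_apply, Matrix.mulVecLin_apply, LinearEquiv.coe_coe,
      LinearMap.prodMap_apply]
    rw [Matrix.fromBlocks_mulVec]
    funext i
    cases i with
    | inl i =>
      rw [he]
      simp only [LinearEquiv.sumArrowLequivProdArrow_symm_apply_inl, Matrix.zero_mulVec,
        Pi.add_apply, Pi.zero_apply, add_zero]
      rfl
    | inr j =>
      rw [he]
      simp only [LinearEquiv.sumArrowLequivProdArrow_symm_apply_inr, Matrix.zero_mulVec,
        Pi.add_apply, Pi.zero_apply, zero_add]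
      rfl
  rw [Matrix.rank, key, LinearMap.comp_assoc] at *
  have h1 : LinearMap.range ((A.mulVecLin.prodMap D.mulVecLin) ∘ₗ (e : (m ⊕ p → F) →ₗ[F] (m → F) × (p → F))) = LinearMap.range (A.mulVecLin.prodMap D.mulVecLin) :=
    LinearMap.range_comp_of_range_eq_top _ (LinearEquiv.range e)
  rw [LinearMap.range_comp, h1,
    LinearEquiv.finrank_map_eq e.symm, myRangeProdMap, finrank_prod_submodule]
  rfl

lemma rank_fromBlocks_schur {m p : Type} [Fintype m] [Fintype p] [DecidableEq m] [DecidableEq p]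
    (A : Matrix m m F) (B : Matrix m p F) (C : Matrix p m F) (D : Matrix p p F) [Invertible D]
    (h : B * ⅟D * C = 0) :
    (Matrix.fromBlocks A B C D).rank = A.rank + Fintype.card p := by
  rw [Matrix.fromBlocks_eq_of_invertible₂₂ A B C D]
  have hL : IsUnit (Matrix.fromBlocks (1 : Matrix m m F) (B * ⅟D) 0 (1 : Matrix p p F)).det := by
    rw [Matrix.det_fromBlocks_zero₂₁]; simp
  have hU : IsUnit (Matrix.fromBlocks (1 : Matrix m m F) 0 (⅟D * C) (1 : Matrix p p F)).det := by
    rw [Matrix.det_fromBlocks_zero₁₂]; simp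
  rw [Matrix.rank_mul_eq_left_of_isUnit_det _ _ hU,
    Matrix.rank_mul_eq_right_of_isUnit_det _ _ hL, h, sub_zero, rank_fromBlocks_diag,
    Matrix.rank_of_isUnit D (isUnit_of_invertible D)]

variable {V : Type} [Fintype V] [DecidableEq V]


lemma mrank_swap (M : Matrix V V (ZMod 2)) (hM : M.IsSymm) {a b : V} (hab : a ≠ b)
    (htwin : M a a = M b b) (hnbr : ∀ v : V, v ≠ a → v ≠ b → M a v = M b v)
    {T : Finset V} (haT : a ∉ T) (hbT : b ∉ T) :
    mrank M (insert a T) = mrank M (insert b T) := by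
  have hmem : ∀ v, v ∈ insert a T ↔ Equiv.swap a b v ∈ insert b T := by
    intro v
    rcases eq_or_ne v a with rfl | hva
    · simp [Equiv.swap_apply_left]
    rcases eq_or_ne v b with rfl | hvb
    · rw [Equiv.swap_apply_right]
      simp only [mem_insert]
      constructor
      · rintro (rfl | h)
        · exact absurd rfl hva
        · exact absurd h hbT
      · rintro (rfl | h)
        · exact absurd rfl hab
        · exact absurd h haT
    · rw [Equiv.swap_apply_of_ne_of_ne hva hvb]
      simp [mem_insert, hva, hvb]
  let e : {v // v ∈ insert a T} ≃ {v // v ∈ insert b T} :=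
    (Equiv.swap a b).subtypeEquiv hmem
  have key : (Matrix.of (fun i j : {v // v ∈ insert a T} => M i.1 j.1)) =
      (Matrix.of (fun i j : {v // v ∈ insert b T} => M i.1 j.1)).submatrix e e := by
    funext i j
    have hval : ∀ u : {v // v ∈ insert a T}, ((e u : {v // v ∈ insert b T}) : V)
        = Equiv.swap a b u.1 := fun _ => rfl
    simp only [Matrix.submatrix_apply, Matrix.of_apply, hval]
    have hsym : ∀ u w : V, M u w = M w u := fun u w => (Matrix.IsSymm.apply hM u w).symm ▸ rfl
    have hpt : ∀ u : V, u ∈ insert a T → ∀ w : V, w ∈ insert a T →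
        M u w = M (Equiv.swap a b u) (Equiv.swap a b w) := by
      intro u hu w hw
      rcases eq_or_ne u a with rfl | hua
      · rcases eq_or_ne w u with rfl | hwa
        · rw [Equiv.swap_apply_left]; exact htwin
        · have hwT : w ∈ T := (mem_insert.1 hw).resolve_left hwa
          have hwb : w ≠ b := fun h => hbT (h ▸ hwT)
          rw [Equiv.swap_apply_left, Equiv.swap_apply_of_ne_of_ne hwa hwb]
          exact hnbr w hwa hwb
      · have huT : u ∈ T := (mem_insert.1 hu).resolve_left hua
        have hub : u ≠ b := fun h => hbT (h ▸ huT)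
        rw [Equiv.swap_apply_of_ne_of_ne hua hub]
        rcases eq_or_ne w a with rfl | hwa
        · rw [Equiv.swap_apply_left]
          rw [hsym u w, hsym u b]
          exact hnbr u hua hub
        · have hwT : w ∈ T := (mem_insert.1 hw).resolve_left hwa
          have hwb : w ≠ b := fun h => hbT (h ▸ hwT)
          rw [Equiv.swap_apply_of_ne_of_ne hwa hwb]
    exact hpt i.1 i.2 j.1 j.2
  unfold mrank
  rw [key, Matrix.rank_submatrix]


lemma mrank_insert_two (M : Matrix V V (ZMod 2)) (hM : M.IsSymm) {a b : V} (hab : a ≠ b)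
    (htwin : (M a a = 1 ∧ M b b = 1 ∧ M a b = 0) ∨ (M a a = 0 ∧ M b b = 0 ∧ M a b = 1))
    (hnbr : ∀ v : V, v ≠ a → v ≠ b → M a v = M b v)
    {T : Finset V} (haT : a ∉ T) (hbT : b ∉ T) :
    mrank M (insert a (insert b T)) = mrank M T + 2 := by
  have hsym : ∀ u w : V, M u w = M w u := fun u w => (Matrix.IsSymm.apply hM u w).symm ▸ rfl
  set S : Finset V := insert a (insert b T) with hS
  have haS : a ∈ S := mem_insert_self _ _
  have hbS : b ∈ S := mem_insert_of_mem (mem_insert_self _ _)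
  have hTS : ∀ v ∈ T, v ∈ S := fun v hv => mem_insert_of_mem (mem_insert_of_mem hv)
  -- the bijection
  let f : ({v // v ∈ T} ⊕ Bool) → {v // v ∈ S} := fun i =>
    Sum.elim (fun v => ⟨v.1, hTS v.1 v.2⟩) (fun i => if i then ⟨b, hbS⟩ else ⟨a, haS⟩) i
  have hf : Function.Bijective f := by
    constructor
    · rintro (u | u) (w | w) h
      · have h0 := Subtype.ext_iff.1 h
        have h1 : u.1 = w.1 := h0
        exact congrArg Sum.inl (Subtype.ext h1)
      · cases w
        · have h0 := Subtype.ext_iff.1 h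
          have h1 : u.1 = a := h0
          exact absurd (h1 ▸ u.2) haT
        · have h0 := Subtype.ext_iff.1 h
          have h1 : u.1 = b := h0
          exact absurd (h1 ▸ u.2) hbT
      · cases u
        · have h0 := Subtype.ext_iff.1 h
          have h1 : a = w.1 := h0
          exact absurd (h1.symm ▸ w.2) haT
        · have h0 := Subtype.ext_iff.1 h
          have h1 : b = w.1 := h0
          exact absurd (h1.symm ▸ w.2) hbT
      · cases u <;> cases w
        · rfl
        · have h0 := Subtype.ext_iff.1 h
          have h1 : a = b := h0
          exact absurd h1 hab
        · have h0 := Subtype.ext_iff.1 h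
          have h1 : b = a := h0
          exact absurd h1 hab.symm
        · rfl
    · rintro ⟨v, hv⟩
      rcases mem_insert.1 hv with rfl | hv'
      · exact ⟨Sum.inr false, rfl⟩
      rcases mem_insert.1 hv' with rfl | hv''
      · exact ⟨Sum.inr true, rfl⟩
      · exact ⟨Sum.inl ⟨v, hv''⟩, rfl⟩
  let e : ({v // v ∈ T} ⊕ Bool) ≃ {v // v ∈ S} := Equiv.ofBijective f hf
  -- block pieces
  let A : Matrix {v // v ∈ T} {v // v ∈ T} (ZMod 2) := Matrix.of fun i j => M i.1 j.1
  let B : Matrix {v // v ∈ T} Bool (ZMod 2) := Matrix.of fun i j => M i.1 (if j then b else a)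
  let C : Matrix Bool {v // v ∈ T} (ZMod 2) := Matrix.of fun i j => M (if i then b else a) j.1
  let D : Matrix Bool Bool (ZMod 2) :=
    Matrix.of fun i j => M (if i then b else a) (if j then b else a)
  have key : (Matrix.of (fun i j : {v // v ∈ S} => M i.1 j.1)).submatrix e e
      = Matrix.fromBlocks A B C D := by
    funext i j
    rcases i with (i | i) <;> rcases j with (j | j)
    · rfl
    · cases j <;> rfl
    · cases i <;> rfl
    · cases i <;> cases j <;> rfl
  have hDD : D * D = 1 := by
    ext i j
    have hba : M b a = M a b := hsym b a
    rcases htwin with ⟨h1, h2, h3⟩ | ⟨h1, h2, h3⟩ <;>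
      cases i <;> cases j <;>
      simp [D, Matrix.mul_apply, Fintype.sum_bool, h1, h2, h3, hba, Matrix.one_apply]
  letI : Invertible D := ⟨D, hDD, hDD⟩
  have hinv : ⅟D = D := rfl
  have hcol : ∀ v : {u // u ∈ T}, M v.1 a = M v.1 b := by
    intro v
    have hva : v.1 ≠ a := fun h => haT (h ▸ v.2)
    have hvb : v.1 ≠ b := fun h => hbT (h ▸ v.2)
    rw [hsym v.1 a, hsym v.1 b]
    exact hnbr v.1 hva hvb
  have hrow : ∀ v : {u // u ∈ T}, M a v.1 = M b v.1 := by
    intro v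
    have hva : v.1 ≠ a := fun h => haT (h ▸ v.2)
    have hvb : v.1 ≠ b := fun h => hbT (h ▸ v.2)
    exact hnbr v.1 hva hvb
  have htwo : ∀ z : ZMod 2, z + z = 0 := by decide
  have hBDC : B * ⅟D * C = 0 := by
    rw [hinv]
    ext v w
    have hba : M b a = M a b := hsym b a
    have h20 : (2 : ZMod 2) = 0 := rfl
    rcases htwin with ⟨h1, h2, h3⟩ | ⟨h1, h2, h3⟩ <;>
      simp only [B, C, D, Matrix.mul_apply, Fintype.sum_bool, Matrix.of_apply,
        Matrix.zero_apply, if_true, if_false, Bool.false_eq_true, ite_true, ite_false,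
        hba, h1, h2, h3, hcol v, hrow w] <;>
      ring_nf <;>
      simp [h20, htwo]
  have hrank : mrank M S = (Matrix.fromBlocks A B C D).rank := by
    unfold mrank
    rw [← key, Matrix.rank_submatrix]
  rw [hrank, rank_fromBlocks_schur A B C D hBDC]
  simp [mrank, A]

end AuxRank

theorem fraternal_twin_reduction {V : Type} [Fintype V] [DecidableEq V]
    {R : Type} [CommRing R] (M : Matrix V V (ZMod 2)) (hM : M.IsSymm)
    (α β : V → R) (x y : R) (a b : V) (hab : a ≠ b)
    (htwin : (M a a = 1 ∧ M b b = 1 ∧ M a b = 0) ∨ (M a a = 0 ∧ M b b = 0 ∧ M a b = 1))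
    (hnbr : ∀ v : V, v ≠ a → v ≠ b → M a v = M b v) :
    interlaceQ M Finset.univ α β x y =
      interlaceQ M (Finset.univ.erase b)
        (Function.update α a (α a * β b + β a * α b))
        (Function.update β a (β a * β b + α a * α b * (x - 1) ^ 2)) x y := by
  set W : Finset V := (Finset.univ.erase a).erase b with hW
  have haW : a ∉ W := fun h => (mem_erase.1 (mem_of_mem_erase h)).1 rfl
  have hbW : b ∉ W := fun h => (mem_erase.1 h).1 rfl
  have hbinsW : insert b W = Finset.univ.erase a := by
    rw [hW, insert_erase (by simp [hab.symm])]
  have hunivsplit : (Finset.univ : Finset V) = insert a (insert b W) := by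
    rw [hbinsW, insert_erase (mem_univ a)]
  have herase_b : Finset.univ.erase b = insert a W := by
    rw [hW, Finset.erase_right_comm, insert_erase (by simp [hab])]
  have hanbW : a ∉ insert b W := by simp [mem_insert, hab, haW]
  set α' := Function.update α a (α a * β b + β a * α b) with hα'
  set β' := Function.update β a (β a * β b + α a * α b * (x - 1) ^ 2) with hβ'
  rw [interlaceQ, interlaceQ]
  conv_lhs => rw [hunivsplit]
  rw [herase_b]
  rw [Finset.sum_powerset_insert hanbW, Finset.sum_powerset_insert hbW,
    Finset.sum_powerset_insert hbW, Finset.sum_powerset_insert haW,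
    ← Finset.sum_add_distrib, ← Finset.sum_add_distrib, ← Finset.sum_add_distrib,
    ← Finset.sum_add_distrib]
  apply Finset.sum_congr rfl
  intro T hT
  have hTW : T ⊆ W := mem_powerset.1 hT
  have haT : a ∉ T := fun h => haW (hTW h)
  have hbT : b ∉ T := fun h => hbW (hTW h)
  have haT' : a ∉ insert b T := by simp [mem_insert, hab, haT]
  -- rank facts
  have hr_swap : mrank M (insert b T) = mrank M (insert a T) :=
    (mrank_swap M hM hab (by rcases htwin with ⟨h1,h2,_⟩|⟨h1,h2,_⟩ <;> rw [h1,h2]) hnbr haT hbT).symm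
  have hr_two : mrank M (insert a (insert b T)) = mrank M T + 2 :=
    mrank_insert_two M hM hab htwin hnbr haT hbT
  -- cardinalities
  have hca : (insert a T).card = T.card + 1 := card_insert_of_notMem haT
  have hcb : (insert b T).card = T.card + 1 := card_insert_of_notMem hbT
  have hcab : (insert a (insert b T)).card = T.card + 2 := by
    rw [card_insert_of_notMem haT', hcb]
  -- set differences
  have haWT : a ∉ W \ T := fun h => haW (mem_sdiff.1 h).1
  have hbWT : b ∉ W \ T := fun h => hbW (mem_sdiff.1 h).1
  have haWT' : a ∉ insert b (W \ T) := by simp [mem_insert, hab, haWT]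
  have hmemW : ∀ v : V, v ∈ W ↔ v ≠ b ∧ v ≠ a := by intro v; simp [hW, mem_erase]
  have hd1 : insert a (insert b W) \ T = insert a (insert b (W \ T)) := by
    rw [← hunivsplit]
    ext v
    simp only [mem_sdiff, mem_univ, true_and, mem_insert, hmemW]
    constructor
    · intro hv
      rcases eq_or_ne v a with rfl | hva
      · exact Or.inl rfl
      rcases eq_or_ne v b with rfl | hvb
      · exact Or.inr (Or.inl rfl)
      · exact Or.inr (Or.inr ⟨⟨hvb, hva⟩, hv⟩)
    · rintro (rfl | rfl | ⟨-, hv⟩)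
      · exact haT
      · exact hbT
      · exact hv
  have hd2 : insert a (insert b W) \ insert b T = insert a (W \ T) := by
    rw [← hunivsplit]
    ext v
    simp only [mem_sdiff, mem_univ, true_and, mem_insert, hmemW, not_or]
    constructor
    · rintro ⟨hvb, hv⟩
      rcases eq_or_ne v a with rfl | hva
      · exact Or.inl rfl
      · exact Or.inr ⟨⟨hvb, hva⟩, hv⟩
    · rintro (rfl | ⟨⟨hvb, -⟩, hv⟩)
      · exact ⟨hab, haT⟩
      · exact ⟨hvb, hv⟩
  have hd3 : insert a (insert b W) \ insert a T = insert b (W \ T) := by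
    rw [← hunivsplit]
    ext v
    simp only [mem_sdiff, mem_univ, true_and, mem_insert, hmemW, not_or]
    constructor
    · rintro ⟨hva, hv⟩
      rcases eq_or_ne v b with rfl | hvb
      · exact Or.inl rfl
      · exact Or.inr ⟨⟨hvb, hva⟩, hv⟩
    · rintro (rfl | ⟨⟨hvb, hva⟩, hv⟩)
      · exact ⟨hab.symm, hbT⟩
      · exact ⟨hva, hv⟩
  have hd4 : insert a (insert b W) \ insert a (insert b T) = W \ T := by
    rw [← hunivsplit]
    ext v
    simp only [mem_sdiff, mem_univ, true_and, mem_insert, hmemW, not_or]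
    constructor
    · rintro ⟨hva, hvb, hv⟩
      exact ⟨⟨hvb, hva⟩, hv⟩
    · rintro ⟨⟨hvb, hva⟩, hv⟩
      exact ⟨hva, hvb, hv⟩
  have hd5 : (insert a W) \ T = insert a (W \ T) := by
    rw [insert_sdiff_of_notMem _ haT]
  have hd6 : (insert a W) \ insert a T = W \ T := by
    rw [insert_sdiff_insert]
    rw [sdiff_insert_of_notMem haW]
  -- weight products
  have hαT : ∀ s ∈ T, α' s = α s := by
    intro s hs
    have hsa : s ≠ a := fun h => haT (h ▸ hs)
    rw [hα', Function.update_of_ne hsa]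
  have hβWT : ∀ v ∈ W \ T, β' v = β v := by
    intro v hv
    have hva : v ≠ a := fun h => haWT (h ▸ hv)
    rw [hβ', Function.update_of_ne hva]
  have hprodαT : (∏ s ∈ T, α' s) = ∏ s ∈ T, α s := Finset.prod_congr rfl hαT
  have hprodβWT : (∏ v ∈ W \ T, β' v) = ∏ v ∈ W \ T, β v := Finset.prod_congr rfl hβWT
  rw [hd1, hd2, hd3, hd4, hd5, hd6, hr_swap, hr_two, hca, hcb, hcab,
    prod_insert haT, prod_insert hbT, prod_insert haT', prod_insert hbT,
    prod_insert haWT, prod_insert hbWT, prod_insert haWT', prod_insert hbWT,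
    prod_insert haWT, prod_insert haT, hprodαT, hprodβWT]
  rw [show α' a = α a * β b + β a * α b from Function.update_self _ _ _,
    show β' a = β a * β b + α a * α b * (x - 1) ^ 2 from Function.update_self _ _ _]
  have hexp1 : T.card + 2 - (mrank M T + 2) = T.card - mrank M T := by omega
  have hexp2 : (x - 1) ^ (mrank M T + 2) = (x - 1) ^ mrank M T * (x - 1) ^ 2 := pow_add _ _ _
  rw [hexp1, hexp2]
  ring
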